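/- arXiv:1602.04553 — 13 statements merged into one kernel-verified Lean document; each statement's English description precedes it below -/
import Mathlib

section
/- Let (G, ℓ) be a morphism-colored groupoid satisfying the inverse-color condition, and let f, g be morphisms of G with ℓ(f) = ℓ(g). Then: (1) for every morphism t with target(t) = source(f), there exists a morphism q with ℓ(q) = ℓ(t) and target(q) = source(g); (2) for every morphism t' with source(t') = target(f), there exists a morphism q' with ℓ(q') = ℓ(t') and source(q') = target(g). -/
open CategoryTheory

universe v u

/-- The type of morphisms of a category, bundled with their endpoints. -/
abbrev Mor (C : Type u) [Category.{v} C] : Type (max u v) := Σ X Y : C, X ⟶ Y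

/-- `(C, ℓ)` is a morphism-colored category: whenever `ℓ g = ℓ (f₂ ≫ f₁)`,
the morphism `g` factors as `g₂ ≫ g₁` with matching colors. -/
def IsMCColoring {C : Type u} [Category.{v} C] {I : Type*} (ℓ : Mor C → I) : Prop :=
  ∀ {A B X Y Z : C} (g : A ⟶ B) (f₂ : X ⟶ Y) (f₁ : Y ⟶ Z),
    ℓ ⟨A, B, g⟩ = ℓ ⟨X, Z, f₂ ≫ f₁⟩ →
    ∃ (M : C) (g₂ : A ⟶ M) (g₁ : M ⟶ B),
      g = g₂ ≫ g₁ ∧ ℓ ⟨A, M, g₂⟩ = ℓ ⟨X, Y, f₂⟩ ∧ ℓ ⟨M, B, g₁⟩ = ℓ ⟨Y, Z, f₁⟩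

/-- The inverse-color condition on a morphism-colored groupoid. -/
def InvColorCond {G : Type u} [Groupoid.{v} G] {I : Type*} (ℓ : Mor G → I) : Prop :=
  ∀ {X Y X' Y' : G} (f : X ⟶ Y) (g : X' ⟶ Y'),
    ℓ ⟨X, Y, f⟩ = ℓ ⟨X', Y', g⟩ →
    ℓ ⟨Y, X, Groupoid.inv f⟩ = ℓ ⟨Y', X', Groupoid.inv g⟩

/-- A nonempty composable sequence of morphisms from `X` to `Y`. -/
inductive Chain (C : Type u) [Category.{v} C] : C → C → Type (max u v) where
  | single {X Y : C} (f : X ⟶ Y) : Chain C X Y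
  | cons {X Y Z : C} (f : X ⟶ Y) (rest : Chain C Y Z) : Chain C X Z

/-- The composite of a composable sequence of morphisms. -/
def Chain.comp {C : Type u} [Category.{v} C] : ∀ {X Y : C}, Chain C X Y → (X ⟶ Y)
  | _, _, .single f => f
  | _, _, .cons f rest => f ≫ rest.comp

/-- The list of colors of a composable sequence of morphisms. -/
def Chain.colors {C : Type u} [Category.{v} C] {I : Type*} (ℓ : Mor C → I) :
    ∀ {X Y : C}, Chain C X Y → List I
  | _, _, .single f => [ℓ ⟨_, _, f⟩]
  | _, _, .cons f rest => ℓ ⟨_, _, f⟩ :: rest.colors ℓ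

/-- The relation `∼¹` on colors: `a ∼¹ b` iff there are composable sequences
of morphisms, of the same length and with componentwise equal colors,
whose composites have colors `a` and `b` respectively. -/
def Sim1 {C : Type u} [Category.{v} C] {I : Type*} (ℓ : Mor C → I) (a b : I) : Prop :=
  ∃ (X Y X' Y' : C) (c : Chain C X Y) (c' : Chain C X' Y'),
    c.colors ℓ = c'.colors ℓ ∧ a = ℓ ⟨X, Y, c.comp⟩ ∧ b = ℓ ⟨X', Y', c'.comp⟩

/-- The color of the identity of an object. -/
def ell0 {C : Type u} [Category.{v} C] {I : Type*} (ℓ : Mor C → I) (x : C) : I :=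
  ℓ ⟨x, x, 𝟙 x⟩

/-- The relation `∼⁰` on identity colors. -/
def Sim0 {C : Type u} [Category.{v} C] {I : Type*} (ℓ : Mor C → I) (a b : I) : Prop :=
  ∃ (X Y X' Y' : C) (f : X ⟶ Y) (g : X' ⟶ Y'),
    Sim1 ℓ (ℓ ⟨X, Y, f⟩) (ℓ ⟨X', Y', g⟩) ∧ a = ell0 ℓ X ∧ b = ell0 ℓ X'

/-- A functor is color-constant if it sends morphisms of equal color to equal morphisms. -/
def ColorConstant {C : Type u} [Category.{v} C] {D : Type*} [Category D] {I : Type*}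
    (ℓ : Mor C → I) (F : C ⥤ D) : Prop :=
  ∀ {X Y X' Y' : C} (f : X ⟶ Y) (g : X' ⟶ Y'),
    ℓ ⟨X, Y, f⟩ = ℓ ⟨X', Y', g⟩ →
    (⟨F.obj X, F.obj Y, F.map f⟩ : Mor D) = ⟨F.obj X', F.obj Y', F.map g⟩

/-- In a morphism-colored groupoid with the inverse-color condition,
if `ℓ f = ℓ g` then colors of morphisms into `source f` occur into `source g`,
and colors of morphisms out of `target f` occur out of `target g`. -/
theorem stmt2 {G : Type u} [Groupoid.{v} G] {I : Type*} (ℓ : Mor G → I)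
    (hℓ : IsMCColoring ℓ) (hinv : InvColorCond ℓ)
    {X Y X' Y' : G} (f : X ⟶ Y) (g : X' ⟶ Y')
    (hfg : ℓ ⟨X, Y, f⟩ = ℓ ⟨X', Y', g⟩) :
    (∀ (Z : G) (t : Z ⟶ X), ∃ (Z' : G) (q : Z' ⟶ X'),
        ℓ ⟨Z', X', q⟩ = ℓ ⟨Z, X, t⟩) ∧
    (∀ (Z : G) (t' : Y ⟶ Z), ∃ (Z' : G) (q' : Y' ⟶ Z'),
        ℓ ⟨Y', Z', q'⟩ = ℓ ⟨Y, Z, t'⟩) := by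
  constructor
  · intro Z t
    have h1 : ℓ ⟨Y', X', Groupoid.inv g⟩ = ℓ ⟨Y, X, Groupoid.inv f⟩ :=
      (hinv f g hfg).symm
    have h2 : ℓ ⟨Y', X', Groupoid.inv g⟩
        = ℓ ⟨Y, X, (Groupoid.inv f ≫ Groupoid.inv t) ≫ t⟩ := by
      rw [h1]; congr 1; simp
    obtain ⟨M, g₂, g₁, _, _, hc1⟩ :=
      hℓ (Groupoid.inv g) (Groupoid.inv f ≫ Groupoid.inv t) t h2
    exact ⟨M, g₁, hc1⟩
  · intro Z t'
    have h2 : ℓ ⟨X', Y', g⟩ = ℓ ⟨X, Y, (f ≫ t') ≫ Groupoid.inv t'⟩ := by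
      rw [← hfg]; congr 1; simp
    obtain ⟨M, g₂, g₁, _, _, hc1⟩ := hℓ g (f ≫ t') (Groupoid.inv t') h2
    refine ⟨M, Groupoid.inv g₁, ?_⟩
    have := hinv g₁ (Groupoid.inv t') hc1
    simpa using this
end

section
/- Let (G, ℓ) be a small morphism-colored groupoid satisfying the inverse-color condition, with colors in a type I. Then the relation ∼¹ is an equivalence relation on the image I₁ = range(ℓ): it is reflexive, symmetric, and transitive on I₁. -/
open CategoryTheory

universe v u

section Aux

variable {C : Type u} [Category.{v} C] {I : Type*}

/-- Concatenation of chains. -/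
def Chain.append : ∀ {X Y Z : C}, Chain C X Y → Chain C Y Z → Chain C X Z
  | _, _, _, .single f, d => .cons f d
  | _, _, _, .cons f rest, d => .cons f (rest.append d)

lemma Chain.comp_append : ∀ {X Y Z : C} (c : Chain C X Y) (d : Chain C Y Z),
    (c.append d).comp = c.comp ≫ d.comp
  | _, _, _, .single f, d => rfl
  | _, _, _, .cons f rest, d => by
      simp [Chain.append, Chain.comp, Chain.comp_append rest d]

lemma Chain.colors_append (ℓ : Mor C → I) :
    ∀ {X Y Z : C} (c : Chain C X Y) (d : Chain C Y Z),
    (c.append d).colors ℓ = c.colors ℓ ++ d.colors ℓ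
  | _, _, _, .single f, d => rfl
  | _, _, _, .cons f rest, d => by
      simp [Chain.append, Chain.colors, Chain.colors_append ℓ rest d]

lemma Chain.colors_ne_nil (ℓ : Mor C → I) {X Y : C} (c : Chain C X Y) :
    c.colors ℓ ≠ [] := by
  cases c <;> simp [Chain.colors]

/-- Factorization of a morphism along a chain of the same total color. -/
lemma Chain.factor (ℓ : Mor C → I) (hℓ : IsMCColoring ℓ) :
    ∀ {X Y : C} (c : Chain C X Y) {A B : C} (gm : A ⟶ B),
    ℓ ⟨A, B, gm⟩ = ℓ ⟨X, Y, c.comp⟩ →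
    ∃ e : Chain C A B, e.comp = gm ∧ e.colors ℓ = c.colors ℓ
  | _, _, .single f, A, B, gm, hg =>
      ⟨.single gm, rfl, by simpa [Chain.colors, Chain.comp] using hg⟩
  | _, _, .cons f rest, A, B, gm, hg => by
      obtain ⟨M, g₂, g₁, hgeq, h₂, h₁⟩ := hℓ gm f rest.comp hg
      obtain ⟨e₁, he₁c, he₁col⟩ := Chain.factor ℓ hℓ rest g₁ h₁
      exact ⟨.cons g₂ e₁, by simp [Chain.comp, he₁c, hgeq],
        by simp [Chain.colors, he₁col, h₂]⟩

end Aux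

section GroupoidAux

variable {G : Type u} [Groupoid.{v} G] {I : Type*}

lemma ginv_comp {X Y Z : G} (f : X ⟶ Y) (g : Y ⟶ Z) :
    Groupoid.inv (f ≫ g) = Groupoid.inv g ≫ Groupoid.inv f := by
  simp [Groupoid.inv_eq_inv]

/-- The reversed chain of inverses. -/
def Chain.rev : ∀ {X Y : G}, Chain G X Y → Chain G Y X
  | _, _, .single f => .single (Groupoid.inv f)
  | _, _, .cons f rest => rest.rev.append (.single (Groupoid.inv f))

lemma Chain.rev_comp : ∀ {X Y : G} (c : Chain G X Y),
    c.rev.comp = Groupoid.inv c.comp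
  | _, _, .single f => rfl
  | _, _, .cons f rest => by
      simp [Chain.rev, Chain.comp_append, Chain.rev_comp rest, Chain.comp, ginv_comp]

lemma Chain.rev_colors_congr (ℓ : Mor G → I) (hinv : InvColorCond ℓ) :
    ∀ {X Y X' Y' : G} (c : Chain G X Y) (d : Chain G X' Y'),
    c.colors ℓ = d.colors ℓ → c.rev.colors ℓ = d.rev.colors ℓ
  | _, _, _, _, .single f, .single g, h => by
      simp only [Chain.colors, List.cons.injEq] at h
      simpa [Chain.rev, Chain.colors] using hinv f g h.1
  | _, _, _, _, .single f, .cons g rest, h => by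
      simp only [Chain.colors, List.cons.injEq] at h
      exact absurd h.2.symm (Chain.colors_ne_nil ℓ rest)
  | _, _, _, _, .cons f rest, .single g, h => by
      simp only [Chain.colors, List.cons.injEq] at h
      exact absurd h.2 (Chain.colors_ne_nil ℓ rest)
  | _, _, _, _, .cons f rest, .cons g rest', h => by
      simp only [Chain.colors, List.cons.injEq] at h
      simp only [Chain.rev, Chain.colors_append, Chain.colors]
      rw [Chain.rev_colors_congr ℓ hinv rest rest' h.2, hinv f g h.1]

/-- Splitting off an identity-colored morphism at the head of a chain. -/
lemma Chain.headSplit (ℓ : Mor G → I) (hℓ : IsMCColoring ℓ) :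
    ∀ {X₂ Y₂ X₃ Y₃ : G} (h : Chain G X₂ Y₂) (k : Chain G X₃ Y₃),
    h.colors ℓ = k.colors ℓ →
    ∃ (V : G) (z : X₃ ⟶ V) (e : Chain G V Y₃),
      z ≫ e.comp = k.comp ∧ ℓ ⟨X₃, V, z⟩ = ℓ ⟨X₂, X₂, 𝟙 X₂⟩ ∧
      e.colors ℓ = k.colors ℓ
  | _, _, _, _, .single h₁, .single k₁, hcol => by
      simp only [Chain.colors, List.cons.injEq] at hcol
      have : ℓ ⟨_, _, k₁⟩ = ℓ ⟨_, _, 𝟙 _ ≫ h₁⟩ := by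
        rw [Category.id_comp]; exact hcol.1.symm
      obtain ⟨V, z, z', hzeq, hz, hz'⟩ := hℓ k₁ (𝟙 _) h₁ this
      exact ⟨V, z, .single z', by simp [Chain.comp, hzeq],
        hz, by simp [Chain.colors, Chain.comp, hz', hcol.1]⟩
  | _, _, _, _, .single h₁, .cons k₁ krest, hcol => by
      simp only [Chain.colors, List.cons.injEq] at hcol
      exact absurd hcol.2.symm (Chain.colors_ne_nil ℓ krest)
  | _, _, _, _, .cons h₁ hrest, .single k₁, hcol => by
      simp only [Chain.colors, List.cons.injEq] at hcol
      exact absurd hcol.2 (Chain.colors_ne_nil ℓ hrest)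
  | _, _, _, _, .cons h₁ hrest, .cons k₁ krest, hcol => by
      simp only [Chain.colors, List.cons.injEq] at hcol
      have : ℓ ⟨_, _, k₁⟩ = ℓ ⟨_, _, 𝟙 _ ≫ h₁⟩ := by
        rw [Category.id_comp]; exact hcol.1.symm
      obtain ⟨V, z, z', hzeq, hz, hz'⟩ := hℓ k₁ (𝟙 _) h₁ this
      exact ⟨V, z, .cons z' krest, by simp [Chain.comp, hzeq],
        hz, by simp [Chain.colors, hz', hcol.1]⟩

/-- Existence of an identity-colored morphism into the target of a chain,
where the identity is that of the target of a matching chain. -/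
lemma Chain.lastSplit (ℓ : Mor G → I) (hℓ : IsMCColoring ℓ) :
    ∀ {X Y X' Y' : G} (f : Chain G X Y) (g : Chain G X' Y'),
    f.colors ℓ = g.colors ℓ →
    ∃ (E : G) (xh : E ⟶ Y), ℓ ⟨E, Y, xh⟩ = ℓ ⟨Y', Y', 𝟙 Y'⟩
  | _, _, _, _, .single f₁, .single g₁, hcol => by
      simp only [Chain.colors, List.cons.injEq] at hcol
      have : ℓ ⟨_, _, f₁⟩ = ℓ ⟨_, _, g₁ ≫ 𝟙 _⟩ := by
        rw [Category.comp_id]; exact hcol.1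
      obtain ⟨E, x, xh, _, _, hxh⟩ := hℓ f₁ g₁ (𝟙 _) this
      exact ⟨E, xh, hxh⟩
  | _, _, _, _, .single f₁, .cons g₁ grest, hcol => by
      simp only [Chain.colors, List.cons.injEq] at hcol
      exact absurd hcol.2.symm (Chain.colors_ne_nil ℓ grest)
  | _, _, _, _, .cons f₁ frest, .single g₁, hcol => by
      simp only [Chain.colors, List.cons.injEq] at hcol
      exact absurd hcol.2 (Chain.colors_ne_nil ℓ frest)
  | _, _, _, _, .cons f₁ frest, .cons g₁ grest, hcol => by
      simp only [Chain.colors, List.cons.injEq] at hcol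
      exact Chain.lastSplit ℓ hℓ frest grest hcol.2

end GroupoidAux

/-- For a small morphism-colored groupoid satisfying the
inverse-color condition, the relation `∼¹` is an equivalence relation on
the image `I₁ = range ℓ`. -/
theorem stmt3 {G : Type u} [Groupoid.{v} G] {I : Type*} (ℓ : Mor G → I)
    (hℓ : IsMCColoring ℓ) (hinv : InvColorCond ℓ) :
    (∀ a ∈ Set.range ℓ, Sim1 ℓ a a) ∧
    (∀ a ∈ Set.range ℓ, ∀ b ∈ Set.range ℓ, Sim1 ℓ a b → Sim1 ℓ b a) ∧
    (∀ a ∈ Set.range ℓ, ∀ b ∈ Set.range ℓ, ∀ c ∈ Set.range ℓ,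
      Sim1 ℓ a b → Sim1 ℓ b c → Sim1 ℓ a c) := by
  refine ⟨?_, ?_, ?_⟩
  · rintro a ⟨⟨X, Y, f0⟩, rfl⟩
    exact ⟨X, Y, X, Y, .single f0, .single f0, rfl, rfl, rfl⟩
  · rintro a - b - ⟨X, Y, X', Y', cc, cc', hcol, ha, hb⟩
    exact ⟨X', Y', X, Y, cc', cc, hcol.symm, hb, ha⟩
  · rintro a - b - c - ⟨X, Y, X', Y', f, g, hfg, ha, hb⟩
      ⟨X₂, Y₂, X₃, Y₃, h, k, hhk, hb', hc⟩
    -- `ℓ h.comp = ℓ g.comp` (both equal `b`)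
    have hvs : ℓ ⟨X₂, Y₂, h.comp⟩ = ℓ ⟨X', Y', g.comp⟩ := hb'.symm.trans hb
    -- `B` : chain at `X₂ ⟶ Y₂` with colors of `g` and composite `h.comp`
    obtain ⟨B, hBcomp, hBcol⟩ := Chain.factor ℓ hℓ g h.comp hvs
    -- `p` : chain at `X' ⟶ Y'` with colors of `h` and composite `g.comp`
    obtain ⟨p, hpcomp, hpcol⟩ := Chain.factor ℓ hℓ h g.comp hvs.symm
    -- a morphism `xh : E ⟶ Y` with the color of `𝟙 Y'`
    obtain ⟨E, xh, hxh⟩ := Chain.lastSplit ℓ hℓ f g hfg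
    -- factor `xh` along `g.rev ++ p`, whose composite is `𝟙 Y'`
    have hid : ℓ ⟨E, Y, xh⟩ = ℓ ⟨Y', Y', Groupoid.inv g.comp ≫ p.comp⟩ := by
      rw [hpcomp, Groupoid.inv_comp]; exact hxh
    obtain ⟨M, q₁, q₂, hxheq, hq₁, hq₂⟩ := hℓ xh (Groupoid.inv g.comp) p.comp hid
    -- `T₂` : chain at `M ⟶ Y` with the colors of `h`
    obtain ⟨T₂, hT₂comp, hT₂col⟩ := Chain.factor ℓ hℓ p q₂ hq₂
    -- split off an identity-colored morphism from `k`
    obtain ⟨V, z, e', he'comp, hz, he'col⟩ := Chain.headSplit ℓ hℓ h k hhk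
    -- factor `z` along `B ++ h.rev`, whose composite is `𝟙 X₂`
    have hid₂ : ℓ ⟨X₃, V, z⟩ = ℓ ⟨X₂, X₂, B.comp ≫ h.rev.comp⟩ := by
      rw [hBcomp, Chain.rev_comp, Groupoid.comp_inv]; exact hz
    obtain ⟨N, r₁, r₂, hzeq, hr₁, hr₂⟩ := hℓ z B.comp h.rev.comp hid₂
    -- `F` : chain at `X₃ ⟶ N` with colors of `g`
    obtain ⟨F, hFcomp, hFcol⟩ := Chain.factor ℓ hℓ B r₁ hr₁
    -- `R'` : chain at `N ⟶ V` with colors of `h.rev`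
    obtain ⟨R', hR'comp, hR'col⟩ := Chain.factor ℓ hℓ h.rev r₂ hr₂
    -- assemble the witnesses
    refine ⟨X, Y, X₃, Y₃, f.append (T₂.rev.append T₂), F.append (R'.append e'),
      ?_, ?_, ?_⟩
    · have h1 : T₂.colors ℓ = h.colors ℓ := hT₂col.trans hpcol
      have h2 : T₂.rev.colors ℓ = h.rev.colors ℓ :=
        Chain.rev_colors_congr ℓ hinv T₂ h h1
      simp only [Chain.colors_append]
      rw [h1, h2, hFcol, hBcol, hR'col, hfg, hhk, he'col]
    · have : (f.append (T₂.rev.append T₂)).comp = f.comp := by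
        simp [Chain.comp_append, Chain.rev_comp, hT₂comp]
      rw [this]; exact ha
    · have : (F.append (R'.append e')).comp = k.comp := by
        rw [Chain.comp_append, Chain.comp_append, hFcomp, hR'comp,
          ← Category.assoc, ← hzeq, he'comp]
      rw [this]; exact hc
end

section
/- Let (G, ℓ) be a small morphism-colored groupoid satisfying the inverse-color condition. If morphisms g, f₁, f₂ of G (with f₂'s target equal to f₁'s source) satisfy ℓ(g) ∼¹ ℓ(f₁ ∘ f₂), then there exist morphisms g₁, g₂ of G such that g = g₁ ∘ g₂, ℓ(g₁) ∼¹ ℓ(f₁), and ℓ(g₂) ∼¹ ℓ(f₂). (In other words, the quotiented coloring again makes G a morphism-colored category.) -/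
open CategoryTheory

universe v u

/-!
Write `ℓ g ∼¹ ℓ (f₂ ≫ f₁)` via chains `c`, `c'` with equal color lists. Since `ℓ` is a
morphism coloring, `g` factors along a chain `d` with the colors of `c`, and `c'.comp` factors
as `h₂ ≫ h₁` with the colors of `f₂` and `f₁`. The last morphisms of `d` and `c'` share a
color, and in a groupoid this lets us split from the last morphism of `d` a final factor `g₁`
with `ℓ g₁ = ℓ h₁ = ℓ f₁`. Then `g₂ := g ≫ g₁⁻¹` is the composite of `d` extended by `g₁⁻¹`,
`h₂` that of `c'` extended by `h₁⁻¹`, and the inverse-color condition makes the two extended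
color lists agree, so `ℓ g₂ ∼¹ ℓ h₂ = ℓ f₂`.
-/

namespace Chain

variable {C : Type u} [Category.{v} C] {I : Type*} (ℓ : Mor C → I)

theorem exists_getLast?_colors_eq : ∀ {X Y : C} (c : Chain C X Y),
    ∃ (P : C) (u : P ⟶ Y), (c.colors ℓ).getLast? = some (ℓ ⟨P, Y, u⟩)
  | _, _, .single f => ⟨_, f, rfl⟩
  | _, _, .cons _ rest => by
      obtain ⟨P, u, hu⟩ := exists_getLast?_colors_eq rest
      exact ⟨P, u, by simp [colors, List.getLast?_cons, hu]⟩

theorem exists_last_color_eq_of_colors_eq {X Y X' Y' : C} (c : Chain C X Y)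
    (c' : Chain C X' Y') (h : c.colors ℓ = c'.colors ℓ) :
    ∃ (P P' : C) (u : P ⟶ Y) (u' : P' ⟶ Y'), ℓ ⟨P, Y, u⟩ = ℓ ⟨P', Y', u'⟩ := by
  obtain ⟨P, u, hu⟩ := exists_getLast?_colors_eq ℓ c
  obtain ⟨P', u', hu'⟩ := exists_getLast?_colors_eq ℓ c'
  exact ⟨P, P', u, u', Option.some.inj (hu.symm.trans (h ▸ hu'))⟩

theorem exists_comp_eq_colors_eq (hℓ : IsMCColoring ℓ) :
    ∀ {X Y : C} (c : Chain C X Y) {A B : C} (g : A ⟶ B),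
      ℓ ⟨A, B, g⟩ = ℓ ⟨X, Y, c.comp⟩ →
      ∃ d : Chain C A B, d.comp = g ∧ d.colors ℓ = c.colors ℓ
  | _, _, .single _, _, _, g, h => ⟨.single g, rfl, by simpa [colors, comp] using h⟩
  | _, _, .cons f rest, _, _, g, h => by
      obtain ⟨M, g₂, g₁, hg, h₂, h₁⟩ := hℓ g f rest.comp h
      obtain ⟨d, hd, hdc⟩ := exists_comp_eq_colors_eq hℓ rest g₁ h₁
      exact ⟨.cons g₂ d, by simp [comp, hd, hg], by simp [colors, hdc, h₂]⟩

def snoc : ∀ {X Y Z : C}, Chain C X Y → (Y ⟶ Z) → Chain C X Z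
  | _, _, _, .single f, w => .cons f (.single w)
  | _, _, _, .cons f rest, w => .cons f (rest.snoc w)

@[simp]
theorem comp_snoc : ∀ {X Y Z : C} (c : Chain C X Y) (w : Y ⟶ Z),
    (c.snoc w).comp = c.comp ≫ w
  | _, _, _, .single _, _ => rfl
  | _, _, _, .cons _ rest, w => by simp [snoc, comp, comp_snoc rest w]

@[simp]
theorem colors_snoc : ∀ {X Y Z : C} (c : Chain C X Y) (w : Y ⟶ Z),
    (c.snoc w).colors ℓ = c.colors ℓ ++ [ℓ ⟨Y, Z, w⟩]
  | _, _, _, .single _, _ => rfl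
  | _, _, _, .cons _ rest, w => by simp [snoc, colors, colors_snoc rest w]

end Chain

section Sim1

variable {C : Type u} [Category.{v} C] {I : Type*} {ℓ : Mor C → I}

theorem Sim1.of_eq {X Y X' Y' : C} (f : X ⟶ Y) (f' : X' ⟶ Y')
    (h : ℓ ⟨X, Y, f⟩ = ℓ ⟨X', Y', f'⟩) : Sim1 ℓ (ℓ ⟨X, Y, f⟩) (ℓ ⟨X', Y', f'⟩) :=
  ⟨X, Y, X', Y', .single f, .single f', by simp [Chain.colors, h], rfl, rfl⟩

theorem Sim1.comp_comp {X Y Z X' Y' Z' : C} (c : Chain C X Y) (c' : Chain C X' Y')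
    (hc : c.colors ℓ = c'.colors ℓ) (w : Y ⟶ Z) (w' : Y' ⟶ Z')
    (hw : ℓ ⟨Y, Z, w⟩ = ℓ ⟨Y', Z', w'⟩) :
    Sim1 ℓ (ℓ ⟨X, Z, c.comp ≫ w⟩) (ℓ ⟨X', Z', c'.comp ≫ w'⟩) :=
  ⟨X, Z, X', Z', c.snoc w, c'.snoc w', by simp [hc, hw], by simp, by simp⟩

end Sim1

-- Factor `u` along `t = (t ≫ h⁻¹) ≫ h`.
theorem IsMCColoring.exists_right_factor_color_eq {G : Type u} [Groupoid.{v} G] {I : Type*}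
    {ℓ : Mor G → I} (hℓ : IsMCColoring ℓ) {P B P' Y M : G} (u : P ⟶ B) (t : P' ⟶ Y)
    (hut : ℓ ⟨P, B, u⟩ = ℓ ⟨P', Y, t⟩) (h : M ⟶ Y) :
    ∃ (N : G) (u₁ : N ⟶ B), ℓ ⟨N, B, u₁⟩ = ℓ ⟨M, Y, h⟩ := by
  obtain ⟨N, _, u₁, -, -, hu₁⟩ :=
    hℓ u (t ≫ Groupoid.inv h) h (by simpa [Groupoid.inv_comp] using hut)
  exact ⟨N, u₁, hu₁⟩

/-- The coloring quotiented by `∼¹` again makes `G` a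
morphism-colored category. -/
theorem stmt4 {G : Type u} [Groupoid.{v} G] {I : Type*} (ℓ : Mor G → I)
    (hℓ : IsMCColoring ℓ) (hinv : InvColorCond ℓ)
    {A B X Y Z : G} (g : A ⟶ B) (f₂ : X ⟶ Y) (f₁ : Y ⟶ Z)
    (hg : Sim1 ℓ (ℓ ⟨A, B, g⟩) (ℓ ⟨X, Z, f₂ ≫ f₁⟩)) :
    ∃ (M : G) (g₂ : A ⟶ M) (g₁ : M ⟶ B),
      g = g₂ ≫ g₁ ∧ Sim1 ℓ (ℓ ⟨A, M, g₂⟩) (ℓ ⟨X, Y, f₂⟩) ∧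
        Sim1 ℓ (ℓ ⟨M, B, g₁⟩) (ℓ ⟨Y, Z, f₁⟩) := by
  obtain ⟨_, _, _, _, c, c', hcc, hgc, hfc⟩ := hg
  obtain ⟨d, rfl, hdc⟩ := Chain.exists_comp_eq_colors_eq ℓ hℓ c g hgc
  obtain ⟨_, h₂, h₁, hh, hh₂, hh₁⟩ := hℓ c'.comp f₂ f₁ hfc.symm
  obtain ⟨_, _, u, t, hut⟩ := Chain.exists_last_color_eq_of_colors_eq ℓ d c' (hdc.trans hcc)
  obtain ⟨N, u₁, hu₁⟩ := hℓ.exists_right_factor_color_eq u t hut h₁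
  refine ⟨N, d.comp ≫ Groupoid.inv u₁, u₁, by simp, ?_, Sim1.of_eq u₁ f₁ (hu₁.trans hh₁)⟩
  have h₂_eq : h₂ = c'.comp ≫ Groupoid.inv h₁ := by simp [hh]
  rw [← hh₂, h₂_eq]
  exact Sim1.comp_comp d c' (hdc.trans hcc) _ _ (hinv u₁ h₁ hu₁)
end

section
/- Let (G, ℓ) be a small morphism-colored groupoid satisfying the inverse-color condition. Then the relation ∼⁰' on the objects of G, defined by x ∼⁰' y iff there exist morphisms f, g of G with source(f) = x, source(g) = y, and ℓ(f) ∼¹ ℓ(g), is an equivalence relation on Obj(G). -/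
open CategoryTheory

universe v u

/-- The color of the first morphism of a chain. -/
def hdColor {C : Type u} [Category.{v} C] {I : Type*} (ℓ : Mor C → I) :
    ∀ {X Y : C}, Chain C X Y → I
  | _, _, .single f => ℓ ⟨_, _, f⟩
  | _, _, .cons f _ => ℓ ⟨_, _, f⟩

lemma hdColor_eq_of_colors_eq {C : Type u} [Category.{v} C] {I : Type*} (ℓ : Mor C → I)
    {X Y X' Y' : C} {c : Chain C X Y} {c' : Chain C X' Y'}
    (h : c.colors ℓ = c'.colors ℓ) : hdColor ℓ c = hdColor ℓ c' := by
  cases c <;> cases c' <;>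
    simp only [Chain.colors, hdColor, List.cons.injEq, List.cons_eq_cons] at h ⊢ <;>
    tauto

/-- If a morphism has the color of the composite of a chain, it starts with a morphism
colored like the first morphism of the chain. -/
lemma exists_first {C : Type u} [Category.{v} C] {I : Type*} {ℓ : Mor C → I}
    (hℓ : IsMCColoring ℓ) {A B X Y : C} (c : Chain C X Y) (m : A ⟶ B)
    (h : ℓ ⟨A, B, m⟩ = ℓ ⟨X, Y, c.comp⟩) :
    ∃ (E : C) (m₁ : A ⟶ E), ℓ ⟨A, E, m₁⟩ = hdColor ℓ c := by
  cases c with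
  | single f => exact ⟨B, m, h⟩
  | cons f rest =>
      obtain ⟨M, g₂, g₁, -, h₂, -⟩ := hℓ m f rest.comp h
      exact ⟨M, g₂, h₂⟩

/-- The relation `∼⁰'` on objects, relating sources of morphisms
with `∼¹`-equivalent colors, is an equivalence relation on `Obj(G)`. -/
theorem stmt6 {G : Type u} [Groupoid.{v} G] {I : Type*} (ℓ : Mor G → I)
    (hℓ : IsMCColoring ℓ) (hinv : InvColorCond ℓ) :
    Equivalence (fun x y : G =>
      ∃ (Y Y' : G) (f : x ⟶ Y) (g : y ⟶ Y'),
        Sim1 ℓ (ℓ ⟨x, Y, f⟩) (ℓ ⟨y, Y', g⟩)) := by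
  constructor
  · intro x
    refine ⟨x, x, 𝟙 x, 𝟙 x, x, x, x, x, .single (𝟙 x), .single (𝟙 x), rfl, rfl, rfl⟩
  · rintro x y ⟨Y, Y', f, g, X₁, Y₁, X₂, Y₂, c, c', hcol, ha, hb⟩
    exact ⟨Y', Y, g, f, X₂, Y₂, X₁, Y₁, c', c, hcol.symm, hb, ha⟩
  · rintro x y z ⟨Y, Y', f, g, hfg⟩ ⟨Z₁, Z₂, g', h, hgh⟩
    obtain ⟨P, Q, P', Q', d, d', hcol, hb, hc⟩ := hgh
    obtain ⟨E, p₁, hp₁⟩ := exists_first hℓ d g' hb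
    obtain ⟨E', w₁, hw₁⟩ := exists_first hℓ d' h hc
    have hpw : ℓ ⟨z, E', w₁⟩ = ℓ ⟨y, E, p₁⟩ := by
      rw [hw₁, hp₁, hdColor_eq_of_colors_eq ℓ hcol]
    have hfact : ℓ ⟨z, E', w₁⟩ = ℓ ⟨y, E, g ≫ (Groupoid.inv g ≫ p₁)⟩ := by
      rw [hpw]
      congr 1
      simp
    obtain ⟨M, s, s', -, hs, -⟩ := hℓ w₁ g (Groupoid.inv g ≫ p₁) hfact
    exact ⟨Y, M, f, s, by rw [hs]; exact hfg⟩
end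

section
/- Let (G, ℓ) be a small morphism-colored groupoid satisfying the inverse-color condition. Then the relation ∼⁰ is an equivalence relation on I₀ = range(ℓ₀): it is reflexive, symmetric, and transitive on I₀. -/
open CategoryTheory

universe v u

lemma chain_colors_ne_nil {C : Type u} [Category.{v} C] {I : Type*} (ℓ : Mor C → I)
    {X Y : C} (c : Chain C X Y) : c.colors ℓ ≠ [] := by
  cases c <;> simp [Chain.colors]

/-- From `Sim1 ℓ (ℓ f) (ℓ g)` we get morphisms out of the sources of `f` and `g`
with literally equal colors. -/
lemma sim1_src {C : Type u} [Category.{v} C] {I : Type*} {ℓ : Mor C → I}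
    (hℓ : IsMCColoring ℓ) {A B A' B' : C} (f : A ⟶ B) (g : A' ⟶ B')
    (h : Sim1 ℓ (ℓ ⟨A, B, f⟩) (ℓ ⟨A', B', g⟩)) :
    ∃ (M M' : C) (p : A ⟶ M) (q : A' ⟶ M'), ℓ ⟨A, M, p⟩ = ℓ ⟨A', M', q⟩ := by
  obtain ⟨X, Y, X', Y', c, c', hcol, hf, hg⟩ := h
  cases c with
  | single u =>
    cases c' with
    | single u' =>
      simp only [Chain.colors, List.cons.injEq] at hcol
      refine ⟨B, B', f, g, ?_⟩
      rw [hf, hg]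
      simpa [Chain.comp] using hcol.1
    | cons u' rest' =>
      exfalso
      simp only [Chain.colors, List.cons.injEq] at hcol
      exact chain_colors_ne_nil ℓ rest' hcol.2.symm
  | cons u rest =>
    cases c' with
    | single u' =>
      exfalso
      simp only [Chain.colors, List.cons.injEq] at hcol
      exact chain_colors_ne_nil ℓ rest hcol.2
    | cons u' rest' =>
      simp only [Chain.colors, List.cons.injEq] at hcol
      have hf' : ℓ ⟨A, B, f⟩ = ℓ ⟨X, Y, u ≫ rest.comp⟩ := by
        rw [hf]; rfl
      have hg' : ℓ ⟨A', B', g⟩ = ℓ ⟨X', Y', u' ≫ rest'.comp⟩ := by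
        rw [hg]; rfl
      obtain ⟨M, f₁, f₂, -, hc1, -⟩ := hℓ f u rest.comp hf'
      obtain ⟨M', g₁, g₂, -, hc1', -⟩ := hℓ g u' rest'.comp hg'
      exact ⟨M, M', f₁, g₁, by rw [hc1, hc1', hcol.1]⟩

/-- From `Sim0 a b` we get morphisms with equal colors whose sources have
identity-colors `a` and `b`. -/
lemma sim0_elim {C : Type u} [Category.{v} C] {I : Type*} {ℓ : Mor C → I}
    (hℓ : IsMCColoring ℓ) {a b : I} (h : Sim0 ℓ a b) :
    ∃ (X Y X' Y' : C) (p : X ⟶ Y) (q : X' ⟶ Y'),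
      ℓ ⟨X, Y, p⟩ = ℓ ⟨X', Y', q⟩ ∧ a = ell0 ℓ X ∧ b = ell0 ℓ X' := by
  obtain ⟨X, Y, X', Y', f, g, h1, ha, hb⟩ := h
  obtain ⟨M, M', p, q, hpq⟩ := sim1_src hℓ f g h1
  exact ⟨X, M, X', M', p, q, hpq, ha, hb⟩

/-- Morphisms with equal colors give `Sim0` between the identity colors of
their sources. -/
lemma sim0_intro {C : Type u} [Category.{v} C] {I : Type*} (ℓ : Mor C → I)
    {X Y X' Y' : C} (p : X ⟶ Y) (q : X' ⟶ Y')
    (h : ℓ ⟨X, Y, p⟩ = ℓ ⟨X', Y', q⟩) : Sim0 ℓ (ell0 ℓ X) (ell0 ℓ X') := by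
  refine ⟨X, Y, X', Y', p, q, ⟨X, Y, X', Y', .single p, .single q, ?_, rfl, rfl⟩, rfl, rfl⟩
  simp [Chain.colors, h]

/-- The relation `∼⁰` is an equivalence relation on
`I₀ = range ℓ₀`. -/
theorem stmt7 {G : Type u} [Groupoid.{v} G] {I : Type*} (ℓ : Mor G → I)
    (hℓ : IsMCColoring ℓ) (hinv : InvColorCond ℓ) :
    (∀ a ∈ Set.range (ell0 ℓ), Sim0 ℓ a a) ∧
    (∀ a ∈ Set.range (ell0 ℓ), ∀ b ∈ Set.range (ell0 ℓ), Sim0 ℓ a b → Sim0 ℓ b a) ∧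
    (∀ a ∈ Set.range (ell0 ℓ), ∀ b ∈ Set.range (ell0 ℓ), ∀ c ∈ Set.range (ell0 ℓ),
      Sim0 ℓ a b → Sim0 ℓ b c → Sim0 ℓ a c) := by
  refine ⟨?_, ?_, ?_⟩
  · rintro a ⟨x, rfl⟩
    exact sim0_intro ℓ (𝟙 x) (𝟙 x) rfl
  · rintro a - b - ⟨X, Y, X', Y', f, g, ⟨A, B, A', B', c, c', hcol, hfc, hgc⟩, ha, hb⟩
    exact ⟨X', Y', X, Y, g, f, ⟨A', B', A, B, c', c, hcol.symm, hgc, hfc⟩, hb, ha⟩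
  · rintro a - b - c - hab hbc
    obtain ⟨X, Y, X', Y', p, q, hpq, ha, hb⟩ := sim0_elim hℓ hab
    obtain ⟨U, V, U', V', p', q', hpq', hb', hc⟩ := sim0_elim hℓ hbc
    -- `ℓ (𝟙 X') = ℓ (𝟙 U) = ℓ (p' ≫ inv p')`; factor to get `r : X' ⟶ M`
    -- with `ℓ r = ℓ p' = ℓ q'`.
    have hid : ℓ ⟨X', X', 𝟙 X'⟩ = ℓ ⟨U, U, p' ≫ Groupoid.inv p'⟩ := by
      have : b = ell0 ℓ U := hb'
      rw [hb] at this
      simpa [ell0, Groupoid.comp_inv] using this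
    obtain ⟨M, r, s, hrs, hr, -⟩ := hℓ (𝟙 X') p' (Groupoid.inv p') hid
    -- `ℓ q' = ℓ r = ℓ (q ≫ (inv q ≫ r))`; factor `q'` to get `t : U' ⟶ N`
    -- with `ℓ t = ℓ q = ℓ p`.
    have hq' : ℓ ⟨U', V', q'⟩ = ℓ ⟨X', M, q ≫ (Groupoid.inv q ≫ r)⟩ := by
      rw [← hpq', ← hr]
      congr 1
      simp [Groupoid.comp_inv, ← Category.assoc]
    obtain ⟨N, t, t₂, -, ht, -⟩ := hℓ q' q (Groupoid.inv q ≫ r) hq'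
    rw [ha, hc]
    exact sim0_intro ℓ p t (by rw [hpq, ← ht])
end

section
/- Let (G, ℓ) be a small morphism-colored groupoid satisfying the inverse-color condition. If (f, g) and (f', g') are composable pairs of morphisms of G (i.e., target(g) = source(f) and target(g') = source(f')) such that ℓ(f) ∼¹ ℓ(f') and ℓ(g) ∼¹ ℓ(g'), then ℓ(f ∘ g) ∼¹ ℓ(f' ∘ g'). -/
open CategoryTheory

universe v u

/-!
By the factorization property of a morphism coloring, a morphism whose color is that of the
composite of a chain can itself be split into a chain with the same color list. Hence the
chains witnessing `ℓ f ∼¹ ℓ f'` may be taken to compose to `f` and `f'` themselves, and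
concatenating them with the witnesses for `g` and `g'` witnesses `ℓ (g ≫ f) ∼¹ ℓ (g' ≫ f')`.
-/

namespace Chain

variable {C : Type u} [Category.{v} C]

def append_s8 : ∀ {X Y Z : C}, Chain C X Y → Chain C Y Z → Chain C X Z
  | _, _, _, .single f, d => .cons f d
  | _, _, _, .cons f rest, d => .cons f (rest.append_s8 d)

theorem comp_append_s8 : ∀ {X Y Z : C} (c : Chain C X Y) (d : Chain C Y Z),
    (c.append_s8 d).comp = c.comp ≫ d.comp
  | _, _, _, .single _, _ => rfl
  | _, _, _, .cons f rest, d => by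
    simp only [append_s8, Chain.comp, comp_append_s8 rest d, Category.assoc]

theorem colors_append_s8 {I : Type*} (ℓ : Mor C → I) :
    ∀ {X Y Z : C} (c : Chain C X Y) (d : Chain C Y Z),
      (c.append_s8 d).colors ℓ = c.colors ℓ ++ d.colors ℓ
  | _, _, _, .single _, _ => rfl
  | _, _, _, .cons f rest, d => by
    simp only [append_s8, Chain.colors, colors_append_s8 ℓ rest d, List.cons_append]

theorem exists_comp_eq_of_color_eq {I : Type*} {ℓ : Mor C → I} (hℓ : IsMCColoring ℓ) :
    ∀ {X Y A B : C} (c : Chain C X Y) (f : A ⟶ B), ℓ ⟨A, B, f⟩ = ℓ ⟨X, Y, c.comp⟩ →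
      ∃ d : Chain C A B, d.comp = f ∧ d.colors ℓ = c.colors ℓ
  | _, _, _, _, .single _, f, h => ⟨.single f, rfl, by rw [Chain.colors, Chain.colors, h]; rfl⟩
  | _, _, _, _, .cons a rest, f, h => by
    obtain ⟨M, f₂, f₁, rfl, h₂, h₁⟩ := hℓ f a rest.comp h
    obtain ⟨d, rfl, hd⟩ := exists_comp_eq_of_color_eq hℓ rest f₁ h₁
    exact ⟨.cons f₂ d, rfl, by rw [Chain.colors, Chain.colors, h₂, hd]⟩

end Chain

namespace Sim1

variable {C : Type u} [Category.{v} C] {I : Type*} {ℓ : Mor C → I}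

theorem exists_chains (hℓ : IsMCColoring ℓ) {X Y X' Y' : C} {f : X ⟶ Y} {f' : X' ⟶ Y'}
    (h : Sim1 ℓ (ℓ ⟨X, Y, f⟩) (ℓ ⟨X', Y', f'⟩)) :
    ∃ (c : Chain C X Y) (c' : Chain C X' Y'),
      c.comp = f ∧ c'.comp = f' ∧ c.colors ℓ = c'.colors ℓ := by
  obtain ⟨_, _, _, _, e, e', he, hf, hf'⟩ := h
  obtain ⟨c, hc, hce⟩ := Chain.exists_comp_eq_of_color_eq hℓ e f hf
  obtain ⟨c', hc', hce'⟩ := Chain.exists_comp_eq_of_color_eq hℓ e' f' hf'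
  exact ⟨c, c', hc, hc', by rw [hce, hce', he]⟩

theorem comp (hℓ : IsMCColoring ℓ) {X Y Z X' Y' Z' : C}
    {g : X ⟶ Y} {f : Y ⟶ Z} {g' : X' ⟶ Y'} {f' : Y' ⟶ Z'}
    (hf : Sim1 ℓ (ℓ ⟨Y, Z, f⟩) (ℓ ⟨Y', Z', f'⟩))
    (hg : Sim1 ℓ (ℓ ⟨X, Y, g⟩) (ℓ ⟨X', Y', g'⟩)) :
    Sim1 ℓ (ℓ ⟨X, Z, g ≫ f⟩) (ℓ ⟨X', Z', g' ≫ f'⟩) := by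
  obtain ⟨cf, cf', rfl, rfl, hcf⟩ := hf.exists_chains hℓ
  obtain ⟨cg, cg', rfl, rfl, hcg⟩ := hg.exists_chains hℓ
  refine ⟨X, Z, X', Z', cg.append_s8 cf, cg'.append_s8 cf', ?_, ?_, ?_⟩
  · rw [Chain.colors_append_s8, Chain.colors_append_s8, hcf, hcg]
  · rw [Chain.comp_append_s8]
  · rw [Chain.comp_append_s8]

end Sim1

theorem stmt8_general {G : Type u} [Groupoid.{v} G] {I : Type*} (ℓ : Mor G → I)
    (hℓ : IsMCColoring ℓ)
    {X Y Z X' Y' Z' : G} (g : X ⟶ Y) (f : Y ⟶ Z) (g' : X' ⟶ Y') (f' : Y' ⟶ Z')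
    (hf : Sim1 ℓ (ℓ ⟨Y, Z, f⟩) (ℓ ⟨Y', Z', f'⟩))
    (hg : Sim1 ℓ (ℓ ⟨X, Y, g⟩) (ℓ ⟨X', Y', g'⟩)) :
    Sim1 ℓ (ℓ ⟨X, Z, g ≫ f⟩) (ℓ ⟨X', Z', g' ≫ f'⟩) :=
  hf.comp hℓ hg

/-- `∼¹` is compatible with composition: if `ℓ f ∼¹ ℓ f'` and
`ℓ g ∼¹ ℓ g'` for composable pairs `(f, g)` and `(f', g')`, then
`ℓ (f ∘ g) ∼¹ ℓ (f' ∘ g')`. -/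
theorem stmt8 {G : Type u} [Groupoid.{v} G] {I : Type*} (ℓ : Mor G → I)
    (hℓ : IsMCColoring ℓ) (hinv : InvColorCond ℓ)
    {X Y Z X' Y' Z' : G} (g : X ⟶ Y) (f : Y ⟶ Z) (g' : X' ⟶ Y') (f' : Y' ⟶ Z')
    (hf : Sim1 ℓ (ℓ ⟨Y, Z, f⟩) (ℓ ⟨Y', Z', f'⟩))
    (hg : Sim1 ℓ (ℓ ⟨X, Y, g⟩) (ℓ ⟨X', Y', g'⟩)) :
    Sim1 ℓ (ℓ ⟨X, Z, g ≫ f⟩) (ℓ ⟨X', Z', g' ≫ f'⟩) :=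
  stmt8_general ℓ hℓ g f g' f' hf hg
end

section
/- Let (G, ℓ) be a small morphism-colored groupoid satisfying the inverse-color condition. For morphisms f, g of G such that ℓ₀(source(f)) ∼⁰ ℓ₀(target(g)), there exists a composable pair (f', g') of morphisms of G (i.e., target(g') = source(f')) such that ℓ(f) ∼¹ ℓ(f') and ℓ(g) ∼¹ ℓ(g'). -/
open CategoryTheory

universe v u

/-- Factoring off the head of a chain: if `ℓ u` equals the color of the composite
of a chain `c`, then there is a morphism out of the source of `u` whose color is
the first color of `c`. -/
lemma headColor_factor {G : Type u} [Groupoid.{v} G] {I : Type*} {ℓ : Mor G → I}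
    (hℓ : IsMCColoring ℓ) {A B C₁ C₂ : G} (u : A ⟶ B) (c : Chain G C₁ C₂)
    (hu : ℓ ⟨A, B, u⟩ = ℓ ⟨C₁, C₂, c.comp⟩) :
    ∃ (S : G) (p : A ⟶ S), (c.colors ℓ).head? = some (ℓ ⟨A, S, p⟩) := by
  cases c with
  | single m =>
      refine ⟨B, u, ?_⟩
      simp only [Chain.colors, List.head?_cons]
      exact congrArg some (by simpa [Chain.comp] using hu.symm)
  | cons m rest =>
      obtain ⟨M, g₂, g₁, -, h₂, -⟩ := hℓ u m rest.comp (by simpa [Chain.comp] using hu)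
      exact ⟨M, g₂, by simp [Chain.colors, h₂]⟩

/-- If `ℓ₀ (source f) ∼⁰ ℓ₀ (target g)`, then there is a composable
pair `(f', g')` with `ℓ f ∼¹ ℓ f'` and `ℓ g ∼¹ ℓ g'`. -/
theorem stmt9 {G : Type u} [Groupoid.{v} G] {I : Type*} (ℓ : Mor G → I)
    (hℓ : IsMCColoring ℓ) (hinv : InvColorCond ℓ)
    {X Y X' Y' : G} (f : X ⟶ Y) (g : X' ⟶ Y')
    (h : Sim0 ℓ (ell0 ℓ X) (ell0 ℓ Y')) :
    ∃ (P Q R : G) (g' : P ⟶ Q) (f' : Q ⟶ R),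
      Sim1 ℓ (ℓ ⟨X, Y, f⟩) (ℓ ⟨Q, R, f'⟩) ∧
      Sim1 ℓ (ℓ ⟨X', Y', g⟩) (ℓ ⟨P, Q, g'⟩) := by
  obtain ⟨A, B, A', B', u, v, hsim, e1, e2⟩ := h
  obtain ⟨C₁, C₂, C₁', C₂', c, c', hcol, ha, hb⟩ := hsim
  obtain ⟨S, p, hp⟩ := headColor_factor hℓ u c ha
  obtain ⟨T, q, hq⟩ := headColor_factor hℓ v c' hb
  have hpq : ℓ ⟨A, S, p⟩ = ℓ ⟨A', T, q⟩ := by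
    have h1 : some (ℓ ⟨A, S, p⟩) = some (ℓ ⟨A', T, q⟩) := by
      rw [← hp, ← hq, hcol]
    exact Option.some.inj h1
  have hinvpq := hinv p q hpq
  obtain ⟨V, γ, ω, -, -, hω⟩ :=
    hℓ (Groupoid.inv p) (Groupoid.inv q) (𝟙 A') (by simpa using hinvpq)
  obtain ⟨W, ω₁, ω₂, -, -, hω₂⟩ :=
    hℓ ω (Groupoid.inv g) g (by rw [Groupoid.inv_comp]; exact hω.trans e2.symm)
  obtain ⟨E, φ, φ', -, hφ, -⟩ :=
    hℓ (𝟙 A) f (Groupoid.inv f) (by rw [Groupoid.comp_inv]; exact e1.symm)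
  refine ⟨W, A, E, ω₂, φ, ?_, ?_⟩
  · exact ⟨X, Y, A, E, .single f, .single φ,
      by simp [Chain.colors, hφ], by simp [Chain.comp], by simp [Chain.comp]⟩
  · exact ⟨X', Y', W, A, .single g, .single ω₂,
      by simp [Chain.colors, hω₂], by simp [Chain.comp], by simp [Chain.comp]⟩
end

section
/- Let (G, ℓ) be a small morphism-colored groupoid satisfying the inverse-color condition, C a category, and F : G ⥤ C a functor that is color-constant with respect to ℓ. Then for all objects x, y of G with ℓ₀(x) ∼⁰ ℓ₀(y), one has F(x) = F(y). -/
open CategoryTheory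

universe v u

lemma mor_fst_eq {G : Type u} [Category.{v} G] {D : Type*} [Category D] {I : Type*}
    {ℓ : Mor G → I} {F : G ⥤ D} (hF : ColorConstant ℓ F)
    {X Y X' Y' : G} (f : X ⟶ Y) (g : X' ⟶ Y')
    (h : ℓ ⟨X, Y, f⟩ = ℓ ⟨X', Y', g⟩) : F.obj X = F.obj X' :=
  congrArg Sigma.fst (hF f g h)

lemma chain_start_eq {G : Type u} [Category.{v} G] {D : Type*} [Category D] {I : Type*}
    {ℓ : Mor G → I} {F : G ⥤ D} (hF : ColorConstant ℓ F)
    {X Y X' Y' : G} (c : Chain G X Y) (c' : Chain G X' Y')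
    (h : c.colors ℓ = c'.colors ℓ) : F.obj X = F.obj X' := by
  cases c <;> cases c' <;>
    simp only [Chain.colors, List.cons.injEq] at h <;>
    exact mor_fst_eq hF _ _ h.1

/-- A color-constant functor takes equal values on objects whose
identity colors are `∼⁰`-equivalent. -/
theorem stmt12 {G : Type u} [Groupoid.{v} G] {I : Type*} (ℓ : Mor G → I)
    (hℓ : IsMCColoring ℓ) (hinv : InvColorCond ℓ)
    {D : Type*} [Category D] (F : G ⥤ D) (hF : ColorConstant ℓ F)
    (x y : G) (h : Sim0 ℓ (ell0 ℓ x) (ell0 ℓ y)) :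
    F.obj x = F.obj y := by
  obtain ⟨X, Y, X', Y', f, g, hs1, hx, hy⟩ := h
  obtain ⟨A, B, A', B', c, c', hc, ha, hb⟩ := hs1
  have h1 : F.obj x = F.obj X := mor_fst_eq hF _ _ hx
  have h2 : F.obj y = F.obj X' := mor_fst_eq hF _ _ hy
  have h3 : F.obj X = F.obj A := mor_fst_eq hF _ _ ha
  have h4 : F.obj X' = F.obj A' := mor_fst_eq hF _ _ hb
  have h5 : F.obj A = F.obj A' := chain_start_eq hF c c' hc
  rw [h1, h2, h3, h4, h5]
end

section
/- Fix integers n ≥ 1 and d > 1. The pair H(d, n) = (G//G, w∘π) is a schemoid: for all morphisms f, g, h, k of the action groupoid G//G with (w∘π)(h) = (w∘π)(k), there exists a bijection between the sets N_h^{(w∘π)(f),(w∘π)(g)} and N_k^{(w∘π)(f),(w∘π)(g)}, where for a morphism h and colors a, b, N_h^{a,b} denotes the set of composable pairs (f', g') of morphisms (target(g') = source(f')) with f' ∘ g' = h, (w∘π)(f') = a, and (w∘π)(g') = b. -/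
open CategoryTheory

universe v u

/-- The Hamming weight of a vector in `(ZMod n)^d`. -/
def hWeight {n d : ℕ} (x : Fin d → ZMod n) : ℕ :=
  (Finset.univ.filter fun i => x i ≠ 0).card

/-- The objects of the action groupoid `G ∕∕ G` for `G = (ZMod n)^d`. -/
abbrev HammingObj (n d : ℕ) : Type := Fin d → ZMod n

/-- The action groupoid `G ∕∕ G` for `G = (ZMod n)^d` acting on itself by
translation: a morphism from `x` to `y` is a pair `(g, x)` with `y = g + x`. -/
instance HammingGroupoid (n d : ℕ) : Groupoid (HammingObj n d) where
  Hom x y := {g : Fin d → ZMod n // y = g + x}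
  id x := ⟨0, by simp⟩
  comp {x y z} f g := ⟨g.1 + f.1, by obtain ⟨gv, rfl⟩ := g; obtain ⟨fv, rfl⟩ := f; rw [add_assoc]⟩
  id_comp {x y} f := by apply Subtype.ext; simp
  comp_id {x y} f := by apply Subtype.ext; simp
  assoc {w x y z} f g h := by apply Subtype.ext; simp [add_assoc]
  inv {x y} f := ⟨-f.1, by obtain ⟨fv, rfl⟩ := f; simp⟩
  inv_comp {x y} f := by apply Subtype.ext; simp
  comp_inv {x y} f := by apply Subtype.ext; simp

/-- The coloring `w ∘ π` of the Hamming schemoid `H(d, n)`: a morphism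
`(g, x)` is colored by the Hamming weight `w(g)`. -/
def hColor (n d : ℕ) : Mor (HammingObj n d) → ℕ :=
  fun m => hWeight m.2.2.1

/-- The set `N_h^{a,b}` of decompositions of `h` into composable pairs `(f', g')`
(`f' ∘ g' = h`, i.e. `g' ≫ f' = h`) with `f'` of color `a` and `g'` of color `b`. -/
def NSet {n d : ℕ} {x z : HammingObj n d} (h : x ⟶ z) (a b : ℕ) :
    Set (Σ m : HammingObj n d, (x ⟶ m) × (m ⟶ z)) :=
  {p | p.2.1 ≫ p.2.2 = h ∧ hColor n d ⟨p.1, z, p.2.2⟩ = a ∧ hColor n d ⟨x, p.1, p.2.1⟩ = b}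


section Aux

variable {n d : ℕ}

lemma hWeight_card (x : Fin d → ZMod n) : hWeight x = Fintype.card {i // x i ≠ 0} := by
  rw [hWeight, Fintype.card_subtype]

lemma sigma_exists (c c' : Fin d → ZMod n) (hw : hWeight c = hWeight c') :
    ∃ σ : Equiv.Perm (Fin d), ∀ j, (c j ≠ 0 ↔ c' (σ j) ≠ 0) := by
  have hcard : Fintype.card {i // c i ≠ 0} = Fintype.card {i // c' i ≠ 0} := by
    rw [← hWeight_card, ← hWeight_card, hw]
  let e := Fintype.equivOfCardEq hcard
  refine ⟨e.extendSubtype, fun j => ?_⟩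
  constructor
  · exact fun hj => e.extendSubtype_mem j hj
  · intro hj
    by_contra hc
    exact e.extendSubtype_not_mem j (not_not_intro hc) hj

lemma key (c c' : Fin d → ZMod n) (hw : hWeight c = hWeight c') (a b : ℕ) :
    Nonempty ({u : Fin d → ZMod n // hWeight (c - u) = a ∧ hWeight u = b} ≃
      {u : Fin d → ZMod n // hWeight (c' - u) = a ∧ hWeight u = b}) := by
  obtain ⟨σ, hσ⟩ := sigma_exists c c' hw
  set τ : Fin d → Equiv.Perm (ZMod n) := fun i => Equiv.swap (c (σ.symm i)) (c' i) with hτ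
  have hτ0 : ∀ i, τ i 0 = 0 := by
    intro i
    by_cases hc : c (σ.symm i) = 0
    · have hc' : c' i = 0 := by
        have := hσ (σ.symm i)
        simp only [Equiv.apply_symm_apply] at this
        by_contra hne
        exact (this.mpr hne) hc
      rw [hτ]; simp [hc, hc']
    · have hc' : c' i ≠ 0 := by
        have := hσ (σ.symm i)
        simp only [Equiv.apply_symm_apply] at this
        exact this.mp hc
      rw [hτ]
      exact Equiv.swap_apply_of_ne_of_ne (Ne.symm hc) (Ne.symm hc')
  have hτz : ∀ i x, τ i x = 0 ↔ x = 0 := by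
    intro i x
    constructor
    · intro hx
      exact (τ i).injective (hx.trans (hτ0 i).symm)
    · intro hx; rw [hx, hτ0]
  have hτc : ∀ i, τ i (c (σ.symm i)) = c' i := fun i => Equiv.swap_apply_left _ _
  have hwu : ∀ u : Fin d → ZMod n,
      hWeight (fun i => τ i (u (σ.symm i))) = hWeight u := by
    intro u
    rw [hWeight_card, hWeight_card]
    refine Fintype.card_congr (Equiv.subtypeEquiv σ fun j => ?_).symm
    simp only [Equiv.symm_apply_apply]
    exact not_congr (hτz (σ j) (u j)).symm
  have hwc : ∀ u : Fin d → ZMod n,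
      hWeight (c' - fun i => τ i (u (σ.symm i))) = hWeight (c - u) := by
    intro u
    rw [hWeight_card, hWeight_card]
    refine Fintype.card_congr (Equiv.subtypeEquiv σ.symm fun i => ?_)
    simp only [Pi.sub_apply, ne_eq]
    apply not_congr
    rw [sub_eq_zero, sub_eq_zero, ← hτc i]
    exact (τ i).apply_eq_iff_eq
  refine ⟨⟨fun u => ⟨fun i => τ i (u.1 (σ.symm i)), ?_, ?_⟩,
    fun u => ⟨fun j => (τ (σ j)).symm (u.1 (σ j)), ?_, ?_⟩, ?_, ?_⟩⟩
  · rw [hwc]; exact u.2.1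
  · rw [hwu]; exact u.2.2
  · have h1 : (fun i => τ i (((fun j => (τ (σ j)).symm (u.1 (σ j)))) (σ.symm i))) = u.1 := by
      funext i
      simp
    have := hwc (fun j => (τ (σ j)).symm (u.1 (σ j)))
    rw [h1] at this
    rw [← this]
    exact u.2.1
  · have h1 : (fun i => τ i (((fun j => (τ (σ j)).symm (u.1 (σ j)))) (σ.symm i))) = u.1 := by
      funext i
      simp
    have := hwu (fun j => (τ (σ j)).symm (u.1 (σ j)))
    rw [h1] at this
    rw [← this]
    exact u.2.2
  · intro u
    apply Subtype.ext
    funext j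
    simp
  · intro u
    apply Subtype.ext
    funext i
    simp

def nsetEquiv {x z : HammingObj n d} (h : x ⟶ z) (a b : ℕ) :
    (NSet h a b) ≃ {u : Fin d → ZMod n // hWeight (h.1 - u) = a ∧ hWeight u = b} where
  toFun p := ⟨p.1.2.1.1, by
    obtain ⟨⟨m, g', f'⟩, hcomp, ha, hb⟩ := p
    obtain ⟨u, rfl⟩ := g'
    have hval : f'.1 + u = h.1 := congrArg Subtype.val hcomp
    have hf : f'.1 = h.1 - u := by rw [← hval]; abel
    constructor
    · rw [show h.1 - u = f'.1 from hf.symm]; exact ha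
    · exact hb⟩
  invFun u := ⟨⟨u.1 + x, ⟨u.1, rfl⟩, ⟨h.1 - u.1, h.2.trans (by abel)⟩⟩,
    Subtype.ext (by show (h.1 - u.1) + u.1 = h.1; abel),
    u.2.1, u.2.2⟩
  left_inv := by
    rintro ⟨⟨m, ⟨u, rfl⟩, ⟨v, hv⟩⟩, hcomp, ha, hb⟩
    have hval : v + u = h.1 := congrArg Subtype.val hcomp
    have hveq : v = h.1 - u := by rw [← hval]; abel
    subst hveq
    rfl
  right_inv u := rfl

lemma nset_nonempty_equiv {x₃ y₃ x₄ y₄ : HammingObj n d} (h : x₃ ⟶ y₃) (k : x₄ ⟶ y₄)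
    (hhk : hWeight h.1 = hWeight k.1) (a b : ℕ) :
    Nonempty ((NSet h a b) ≃ (NSet k a b)) := by
  obtain ⟨Φ⟩ := key h.1 k.1 hhk a b
  exact ⟨(nsetEquiv h a b).trans (Φ.trans (nsetEquiv k a b).symm)⟩

end Aux

/-- `H(d, n) = (G ∕∕ G, w ∘ π)` is a schemoid. -/
theorem stmt13 (n d : ℕ) (hn : 1 ≤ n) (hd : 1 < d)
    (x₁ y₁ x₂ y₂ x₃ y₃ x₄ y₄ : HammingObj n d)
    (f : x₁ ⟶ y₁) (g : x₂ ⟶ y₂) (h : x₃ ⟶ y₃) (k : x₄ ⟶ y₄)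
    (hhk : hColor n d ⟨x₃, y₃, h⟩ = hColor n d ⟨x₄, y₄, k⟩) :
    Nonempty
      ((NSet h (hColor n d ⟨x₁, y₁, f⟩) (hColor n d ⟨x₂, y₂, g⟩)) ≃
        (NSet k (hColor n d ⟨x₁, y₁, f⟩) (hColor n d ⟨x₂, y₂, g⟩))) := by
  exact nset_nonempty_equiv h k hhk _ _
end

section
/- Fix integers n > 2 and d ≥ 1, and consider the morphism-colored groupoid H(d, n) = (G//G, w∘π) with colors in ℕ. Then for all natural numbers a, b with a ≤ d and b ≤ d, one has a ∼¹ b, where ∼¹ is the relation associated to H(d, n). (In particular the quotient group Ī₁ is trivial and any two colors are identified.) -/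
open CategoryTheory

universe v u

lemma card_filter_val_lt (d k : ℕ) (hk : k ≤ d) :
    (Finset.univ.filter fun i : Fin d => (i:ℕ) < k).card = k := by
  have : (Finset.univ.filter fun i : Fin d => (i:ℕ) < k).card = (Finset.range k).card := by
    apply Finset.card_bij' (fun (i : Fin d) _ => (i : ℕ))
      (fun j hj => (⟨j, by simp at hj; omega⟩ : Fin d)) <;>
      simp +contextual [Fin.ext_iff]
  simpa using this

/-- For `n > 2`, any two colors `a, b ≤ d` of the Hamming
morphism-colored groupoid `H(d, n)` are `∼¹`-equivalent. -/
theorem stmt14 (n d : ℕ) (hn : 2 < n) (hd : 1 ≤ d)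
    (a b : ℕ) (ha : a ≤ d) (hb : b ≤ d) :
    Sim1 (hColor n d) a b := by
  haveI : Fact (1 < n) := ⟨by omega⟩
  have h1 : (1 : ZMod n) ≠ 0 := one_ne_zero
  have hneg1 : (-1 : ZMod n) ≠ 0 := by simpa using h1
  have h2 : (2 : ZMod n) ≠ 0 := by
    have : ((2 : ℕ) : ZMod n) ≠ 0 := by
      rw [Ne, ZMod.natCast_eq_zero_iff]
      intro hdvd
      exact absurd (Nat.le_of_dvd (by norm_num) hdvd) (by omega)
    simpa using this
  set g : Fin d → ZMod n := fun _ => 1 with hg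
  set h : ℕ → Fin d → ZMod n := fun k i => if (i:ℕ) < k then 1 else -1 with hh
  have wg : hWeight g = d := by
    simp [hWeight, hg, h1, Finset.filter_true_of_mem]
  have wh : ∀ k, hWeight (h k) = d := by
    intro k
    have : ∀ i : Fin d, h k i ≠ 0 := by
      intro i; simp only [hh]; split <;> assumption
    simp [hWeight, this, Finset.filter_true_of_mem]
  have wsum : ∀ k, k ≤ d → hWeight (h k + g) = k := by
    intro k hk
    have he : ∀ i : Fin d, (h k + g) i ≠ 0 ↔ (i:ℕ) < k := by
      intro i
      by_cases hi : (i:ℕ) < k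
      · simp [hh, hg, hi, one_add_one_eq_two, h2]
      · simp [hh, hg, hi]
    rw [hWeight]
    rw [Finset.filter_congr (fun i _ => by rw [he i])]
    exact card_filter_val_lt d k hk
  -- the chains
  refine ⟨0, h a + g, 0, h b + g,
    .cons (⟨g, by simp⟩ : (0 : HammingObj n d) ⟶ g) (.single ⟨h a, rfl⟩),
    .cons (⟨g, by simp⟩ : (0 : HammingObj n d) ⟶ g) (.single ⟨h b, rfl⟩), ?_, ?_, ?_⟩
  · simp [Chain.colors, hColor, wg, wh]
  · simp only [Chain.comp, hColor]
    change a = hWeight (h a + g)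
    rw [wsum a ha]
  · simp only [Chain.comp, hColor]
    change b = hWeight (h b + g)
    rw [wsum b hb]
end

section
/- Fix an integer d ≥ 1 and consider the morphism-colored groupoid H(d, 2) = (G//G, w∘π) with colors in ℕ. Then for all natural numbers a, b with a ≤ d and b ≤ d, one has a ∼¹ b if and only if a ≡ b (mod 2), where ∼¹ is the relation associated to H(d, 2). (In particular the quotient Ī₁ is a group isomorphic to ℤ/2ℤ.) -/
open CategoryTheory

universe v u

lemma wz {d : ℕ} (x : Fin d → ZMod 2) : ((hWeight x : ℕ) : ZMod 2) = ∑ i, x i := by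
  rw [hWeight, Finset.card_eq_sum_ones, Nat.cast_sum, Finset.sum_filter]
  apply Finset.sum_congr rfl
  intro i _
  by_cases h : x i = 0
  · simp [h]
  · have h2 : ∀ c : ZMod 2, c = 0 ∨ c = 1 := by decide
    rcases h2 (x i) with h1 | h1
    · exact absurd h1 h
    · simp [h, h1]

lemma chain_sum {d : ℕ} {X Y : HammingObj 2 d} (c : Chain (HammingObj 2 d) X Y) :
    ((hColor 2 d ⟨X, Y, c.comp⟩ : ℕ) : ZMod 2)
      = ((c.colors (hColor 2 d)).map (fun n => (n : ZMod 2))).sum := by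
  induction c with
  | single f => simp [Chain.comp, Chain.colors]
  | cons f rest ih =>
    have key : ((hColor 2 d ⟨_, _, (Chain.cons f rest).comp⟩ : ℕ) : ZMod 2)
        = ((hColor 2 d ⟨_, _, f⟩ : ℕ) : ZMod 2)
          + ((hColor 2 d ⟨_, _, rest.comp⟩ : ℕ) : ZMod 2) := by
      show ((hWeight ((rest.comp).1 + f.1) : ℕ) : ZMod 2)
        = ((hWeight f.1 : ℕ) : ZMod 2) + ((hWeight (rest.comp).1 : ℕ) : ZMod 2)
      rw [wz, wz, wz, ← Finset.sum_add_distrib]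
      exact Finset.sum_congr rfl fun i _ => by simp [Pi.add_apply, add_comm]
    rw [key, ih]
    simp [Chain.colors]

/-- Interval indicator vector. -/
def ind (d s t : ℕ) : Fin d → ZMod 2 := fun i => if s ≤ (i : ℕ) ∧ (i : ℕ) < t then 1 else 0

lemma ind_weight {d : ℕ} (s t : ℕ) (htd : t ≤ d) : hWeight (ind d s t) = t - s := by
  unfold hWeight ind
  have h1 : (Finset.univ.filter fun i : Fin d =>
      (if s ≤ (i : ℕ) ∧ (i : ℕ) < t then (1 : ZMod 2) else 0) ≠ 0)
      = Finset.univ.filter fun i : Fin d => s ≤ (i : ℕ) ∧ (i : ℕ) < t := by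
    ext i
    simp only [Finset.mem_filter, Finset.mem_univ, true_and]
    split_ifs with h <;> simp [h]
  rw [h1, ← Finset.card_image_of_injective _ Fin.val_injective]
  have h2 : Finset.image Fin.val (Finset.univ.filter fun i : Fin d =>
      s ≤ (i : ℕ) ∧ (i : ℕ) < t) = Finset.Ico s t := by
    ext m
    simp only [Finset.mem_image, Finset.mem_filter, Finset.mem_univ, true_and,
      Finset.mem_Ico]
    constructor
    · rintro ⟨i, ⟨h1, h2⟩, rfl⟩; exact ⟨h1, h2⟩
    · rintro ⟨hm1, hm2⟩
      exact ⟨⟨m, lt_of_lt_of_le hm2 htd⟩, ⟨hm1, hm2⟩, rfl⟩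
  rw [h2, Nat.card_Ico]

lemma ind_add {d : ℕ} (a k t : ℕ) (h : a + k ≤ t ∨ t = a + k) :
    True := trivial

lemma sim1_symm {C : Type u} [Category.{v} C] {I : Type*} (ℓ : Mor C → I) {a b : I}
    (h : Sim1 ℓ a b) : Sim1 ℓ b a := by
  obtain ⟨X, Y, X', Y', c, c', h1, h2, h3⟩ := h
  exact ⟨X', Y', X, Y, c', c, h1.symm, h3, h2⟩

lemma sim1_of_le {d : ℕ} {a b : ℕ} (hab : a ≤ b) (hb : b ≤ d)
    (hpar : a % 2 = b % 2) : Sim1 (hColor 2 d) a b := by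
  set k := (b - a) / 2 with hk
  have hbk : b = a + 2 * k := by omega
  have hakd : a + k ≤ d := by omega
  -- vectors
  set g1 : Fin d → ZMod 2 := ind d 0 (a + k) with hg1
  set g2 : Fin d → ZMod 2 := ind d a (a + k) with hg2
  set h2v : Fin d → ZMod 2 := ind d (a + k) (a + 2 * k) with hh2
  have hsum1 : g2 + g1 = ind d 0 a := by
    funext i
    simp only [hg1, hg2, ind, Pi.add_apply]
    split_ifs <;> first | rfl | omega | decide
  have hsum2 : h2v + g1 = ind d 0 (a + 2 * k) := by
    funext i
    simp only [hg1, hh2, ind, Pi.add_apply]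
    split_ifs <;> first | rfl | omega | decide
  -- chain 1 : 0 ⟶ g1 ⟶ g2 + g1
  let f1 : (0 : HammingObj 2 d) ⟶ g1 := ⟨g1, (add_zero g1).symm⟩
  let f2 : (g1 : HammingObj 2 d) ⟶ g2 + g1 := ⟨g2, rfl⟩
  let c : Chain (HammingObj 2 d) 0 (g2 + g1) := Chain.cons f1 (Chain.single f2)
  -- chain 2 : 0 ⟶ g1 ⟶ h2v + g1
  let f1' : (0 : HammingObj 2 d) ⟶ g1 := ⟨g1, (add_zero g1).symm⟩
  let f2' : (g1 : HammingObj 2 d) ⟶ h2v + g1 := ⟨h2v, rfl⟩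
  let c' : Chain (HammingObj 2 d) 0 (h2v + g1) := Chain.cons f1' (Chain.single f2')
  refine ⟨0, g2 + g1, 0, h2v + g1, c, c', ?_, ?_, ?_⟩
  · show [hColor 2 d ⟨_, _, f1⟩, hColor 2 d ⟨_, _, f2⟩]
      = [hColor 2 d ⟨_, _, f1'⟩, hColor 2 d ⟨_, _, f2'⟩]
    show [hWeight g1, hWeight g2] = [hWeight g1, hWeight h2v]
    rw [hg2, hh2, ind_weight 0 (a + k) hakd, ind_weight a (a + k) hakd,
      ind_weight (a + k) (a + 2 * k) (by omega)]
    have : a + k - a = a + 2 * k - (a + k) := by omega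
    rw [this]
  · show a = hColor 2 d ⟨_, _, f1 ≫ Chain.comp (Chain.single f2)⟩
    show a = hWeight (g2 + g1)
    rw [hsum1, ind_weight _ _ (by omega)]
    omega
  · show b = hColor 2 d ⟨_, _, f1' ≫ Chain.comp (Chain.single f2')⟩
    show b = hWeight (h2v + g1)
    rw [hsum2, ind_weight _ _ (by omega)]
    omega

/-- For the Hamming morphism-colored groupoid `H(d, 2)`, colors
`a, b ≤ d` are `∼¹`-equivalent iff they have the same parity. -/
theorem stmt16 (d : ℕ) (hd : 1 ≤ d)
    (a b : ℕ) (ha : a ≤ d) (hb : b ≤ d) :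
    Sim1 (hColor 2 d) a b ↔ a % 2 = b % 2 := by
  constructor
  · rintro ⟨X, Y, X', Y', c, c', hcol, rfl, rfl⟩
    have h1 := chain_sum c
    have h2 := chain_sum c'
    rw [hcol] at h1
    have : ((hColor 2 d ⟨X, Y, c.comp⟩ : ℕ) : ZMod 2)
        = ((hColor 2 d ⟨X', Y', c'.comp⟩ : ℕ) : ZMod 2) := h1.trans h2.symm
    rwa [ZMod.natCast_eq_natCast_iff'] at this
  · intro hpar
    rcases le_total a b with hab | hab
    · exact sim1_of_le hab hb hpar
    · exact sim1_symm _ (sim1_of_le hab ha hpar.symm)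
end

section
/- Fix a category C, integers n > 2 and n' > 2, and integers d ≥ 1 and d' ≥ 1. There is a bijection (an Equiv) between the set of functors F : (G//G for (ZMod n)^d) ⥤ C that are color-constant with respect to w∘π, and the set of functors F' : (G//G for (ZMod n')^{d'}) ⥤ C that are color-constant with respect to w∘π. (Equivalently, there is a one-to-one correspondence between morphism-colored functors from H(d, n) to the discrete morphism-colored category (C, id) and morphism-colored functors from H(d', n') to (C, id).) -/
open CategoryTheory

universe v u

universe v' u'

section AuxProof

variable {C : Type u'} [Category.{v'} C]

lemma mor_eq_conj {A B A' B' Z : C} {f : A ⟶ B} {f' : A' ⟶ B'}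
    (h : (⟨A, B, f⟩ : Mor C) = ⟨A', B', f'⟩)
    (pA : A = Z) (pB : B = Z) (pA' : A' = Z) (pB' : B' = Z) :
    eqToHom pA.symm ≫ f ≫ eqToHom pB = eqToHom pA'.symm ≫ f' ≫ eqToHom pB' := by
  obtain ⟨h1, h2⟩ := Sigma.mk.inj_iff.mp h
  subst h1
  obtain ⟨h3, h4⟩ := Sigma.mk.inj_iff.mp (eq_of_heq h2)
  subst h3
  cases eq_of_heq h4
  rfl

lemma idem_iso_eq_id {X : C} (f : X ⟶ X) [IsIso f] (h : f ≫ f = f) : f = 𝟙 X := by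
  have h2 := congrArg (fun g => g ≫ CategoryTheory.inv f) h
  simpa using h2

variable {n d : ℕ}

lemma cc_obj_eq (F : HammingObj n d ⥤ C) (hF : ColorConstant (hColor n d) F)
    (x : HammingObj n d) : F.obj x = F.obj 0 := by
  have h := hF (𝟙 x) (𝟙 (0 : HammingObj n d)) rfl
  exact congrArg Sigma.fst h

lemma cc_map (hn : 2 < n) (F : HammingObj n d ⥤ C) (hF : ColorConstant (hColor n d) F)
    {x y : HammingObj n d} (m : x ⟶ y) :
    eqToHom (cc_obj_eq F hF x).symm ≫ F.map m ≫ eqToHom (cc_obj_eq F hF y) =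
      𝟙 (F.obj 0) := by
  haveI : Fact (1 < n) := ⟨by omega⟩
  have h1 : (1 : ZMod n) ≠ 0 := one_ne_zero
  have h2 : (2 : ZMod n) ≠ 0 := by
    haveI : NeZero n := ⟨by omega⟩
    intro h
    rw [show (2 : ZMod n) = ((2 : ℕ) : ZMod n) by norm_cast,
      ZMod.natCast_eq_zero_iff] at h
    exact absurd (Nat.le_of_dvd (by norm_num) h) (by omega)
  set e := cc_obj_eq F hF with he
  have key : ∀ {a b a' b' : HammingObj n d} (f : a ⟶ b) (f' : a' ⟶ b'),
      hColor n d ⟨a, b, f⟩ = hColor n d ⟨a', b', f'⟩ →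
      eqToHom (e a).symm ≫ F.map f ≫ eqToHom (e b) =
        eqToHom (e a').symm ≫ F.map f' ≫ eqToHom (e b') := by
    intro a b a' b' f f' hc
    exact mor_eq_conj (hF f f' hc) (e a) (e b) (e a') (e b')
  set v : HammingObj n d := fun i => if m.1 i ≠ 0 then 1 else 0 with hv
  have hsupp : hWeight v = hWeight m.1 := by
    unfold hWeight
    congr 1
    apply Finset.filter_congr
    intro i _
    by_cases hgi : m.1 i = 0 <;> simp [hv, hgi, h1]
  have hsupp2 : hWeight (v + v) = hWeight v := by
    unfold hWeight
    congr 1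
    apply Finset.filter_congr
    intro i _
    by_cases hgi : m.1 i = 0 <;> simp [hv, hgi, h1, one_add_one_eq_two, h2]
  let m1 : (0 : HammingObj n d) ⟶ v + 0 := ⟨v, rfl⟩
  let m2 : (v + 0 : HammingObj n d) ⟶ v + (v + 0) := ⟨v, rfl⟩
  have hcA : eqToHom (e x).symm ≫ F.map m ≫ eqToHom (e y) =
      eqToHom (e 0).symm ≫ F.map m1 ≫ eqToHom (e (v + 0)) := by
    apply key
    show hWeight m.1 = hWeight v
    exact hsupp.symm
  have hcB : eqToHom (e (v + 0)).symm ≫ F.map m2 ≫ eqToHom (e (v + (v + 0))) =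
      eqToHom (e 0).symm ≫ F.map m1 ≫ eqToHom (e (v + 0)) := by
    apply key
    rfl
  have hcC : eqToHom (e 0).symm ≫ F.map (m1 ≫ m2) ≫ eqToHom (e (v + (v + 0))) =
      eqToHom (e 0).symm ≫ F.map m1 ≫ eqToHom (e (v + 0)) := by
    apply key
    show hWeight (v + v) = hWeight v
    exact hsupp2
  have hcomp : eqToHom (e 0).symm ≫ F.map (m1 ≫ m2) ≫ eqToHom (e (v + (v + 0))) =
      (eqToHom (e 0).symm ≫ F.map m1 ≫ eqToHom (e (v + 0))) ≫
        (eqToHom (e (v + 0)).symm ≫ F.map m2 ≫ eqToHom (e (v + (v + 0)))) := by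
    simp
  have hidem : (eqToHom (e 0).symm ≫ F.map m1 ≫ eqToHom (e (v + 0))) ≫
      (eqToHom (e 0).symm ≫ F.map m1 ≫ eqToHom (e (v + 0))) =
      eqToHom (e 0).symm ≫ F.map m1 ≫ eqToHom (e (v + 0)) := by
    calc (eqToHom (e 0).symm ≫ F.map m1 ≫ eqToHom (e (v + 0))) ≫
        (eqToHom (e 0).symm ≫ F.map m1 ≫ eqToHom (e (v + 0)))
        = (eqToHom (e 0).symm ≫ F.map m1 ≫ eqToHom (e (v + 0))) ≫
          (eqToHom (e (v + 0)).symm ≫ F.map m2 ≫ eqToHom (e (v + (v + 0)))) := by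
          rw [hcB]
      _ = eqToHom (e 0).symm ≫ F.map (m1 ≫ m2) ≫ eqToHom (e (v + (v + 0))) := hcomp.symm
      _ = eqToHom (e 0).symm ≫ F.map m1 ≫ eqToHom (e (v + 0)) := hcC
  haveI : IsIso m1 := ⟨Groupoid.inv m1, Groupoid.comp_inv m1, Groupoid.inv_comp m1⟩
  haveI : IsIso (F.map m1) := inferInstance
  have hid : eqToHom (e 0).symm ≫ F.map m1 ≫ eqToHom (e (v + 0)) = 𝟙 (F.obj 0) :=
    idem_iso_eq_id _ hidem
  rw [hcA, hid]

/-- Color-constant functors from `H(d, n)` correspond to objects of `C`. -/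
noncomputable def ccEquiv (n d : ℕ) (hn : 2 < n) :
    {F : HammingObj n d ⥤ C // ColorConstant (hColor n d) F} ≃ C where
  toFun F := F.1.obj 0
  invFun X := ⟨(Functor.const _).obj X, by intro a b a' b' f g _; rfl⟩
  left_inv F := by
    apply Subtype.ext
    show (Functor.const (HammingObj n d)).obj (F.1.obj 0) = F.1
    have hobj : ∀ x, ((Functor.const (HammingObj n d)).obj (F.1.obj 0)).obj x = F.1.obj x :=
      fun x => (cc_obj_eq F.1 F.2 x).symm
    exact CategoryTheory.Functor.ext hobj (fun a b f => (cc_map hn F.1 F.2 f).symm)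
  right_inv X := rfl

end AuxProof

/-- For `n, n' > 2` and `d, d' ≥ 1`, color-constant functors
from `H(d, n)` to a category `C` correspond bijectively to color-constant
functors from `H(d', n')` to `C`. -/
theorem stmt17 (C : Type u') [Category.{v'} C]
    (n n' d d' : ℕ) (hn : 2 < n) (hn' : 2 < n') (hd : 1 ≤ d) (hd' : 1 ≤ d') :
    Nonempty
      ({F : HammingObj n d ⥤ C // ColorConstant (hColor n d) F} ≃
        {F' : HammingObj n' d' ⥤ C // ColorConstant (hColor n' d') F'}) := by
  exact ⟨(ccEquiv n d hn).trans (ccEquiv n' d' hn').symm⟩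
end

section
/- Fix a category C and positive integers d and d'. There is a bijection (an Equiv) between the set of functors F : (G//G for (ZMod 2)^d) ⥤ C that are color-constant with respect to w∘π, and the set of functors F' : (G//G for (ZMod 2)^{d'}) ⥤ C that are color-constant with respect to w∘π. (Equivalently, there is a one-to-one correspondence between morphism-colored functors from H(d, 2) to the discrete morphism-colored category (C, id) and morphism-colored functors from H(d', 2) to (C, id).) -/
open CategoryTheory

universe v u

universe v' u'

/-!
A color-constant functor `F` sends every object to `X := F.obj 0`, since all identities have
weight `0`. Transported to `X`, a morphism of weight `k + 1` splits off a weight-one coordinate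
step, so it goes to `e ^ (k + 1)`, where `e` is the common image of the weight-one morphisms;
and `e ^ 2 = 1` because a morphism and its inverse have the same weight. Conversely, over
`ZMod 2` the weight is additive modulo `2`, so every involution `e` of `X` yields the
color-constant functor `f ↦ e ^ w(f)`. For `d ≥ 1` both constructions are mutually inverse, so the
color-constant functors from `H(d, 2)` to `C` correspond to the involutions of `C`, independently
of `d`.
-/

lemma hWeight_eq_zero_iff {n d : ℕ} {x : Fin d → ZMod n} : hWeight x = 0 ↔ x = 0 :=
  hammingNorm_eq_zero

lemma hWeight_single {n d : ℕ} (i : Fin d) {a : ZMod n} (ha : a ≠ 0) :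
    hWeight (Pi.single i a) = 1 := by
  rw [hWeight, Finset.card_eq_one]
  exact ⟨i, by ext j; by_cases hj : j = i <;> simp [hj, ha]⟩

lemma hWeight_update_zero_add_one {n d : ℕ} {x : Fin d → ZMod n} {i : Fin d} (hi : x i ≠ 0) :
    hWeight (Function.update x i 0) + 1 = hWeight x := by
  have : Finset.univ.filter (fun j => Function.update x i 0 j ≠ 0) =
      (Finset.univ.filter fun j => x j ≠ 0).erase i := by
    ext j; by_cases hj : j = i <;> simp [hj]
  rw [hWeight, hWeight, this, Finset.card_erase_add_one (by simpa using hi)]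

lemma hWeight_neg {n d : ℕ} (x : Fin d → ZMod n) : hWeight (-x) = hWeight x := by
  simp only [hWeight, Pi.neg_apply, neg_ne_zero]

lemma hWeight_cast_zmod_two {d : ℕ} (x : Fin d → ZMod 2) : (hWeight x : ZMod 2) = ∑ i, x i := by
  have h01 : ∀ a : ZMod 2, (if a ≠ 0 then (1 : ZMod 2) else 0) = a := by decide
  rw [hWeight, Finset.card_filter]
  push_cast
  exact Finset.sum_congr rfl fun i _ => h01 (x i)

lemma hWeight_add_mod_two {d : ℕ} (x y : Fin d → ZMod 2) :
    hWeight (x + y) % 2 = (hWeight x + hWeight y) % 2 := by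
  rw [← ZMod.natCast_eq_natCast_iff']
  push_cast
  simp only [hWeight_cast_zmod_two, Pi.add_apply, Finset.sum_add_distrib]

namespace HammingObj

variable {n d : ℕ}

instance (x y : HammingObj n d) : Subsingleton (x ⟶ y) :=
  ⟨fun f g => Subtype.ext (by rw [← add_right_cancel_iff (a := x), ← f.2, ← g.2])⟩

def ofAdd (g : Fin d → ZMod n) (x : HammingObj n d) : x ⟶ (g + x : HammingObj n d) := ⟨g, rfl⟩

lemma exists_comp_of_eq_add {x y : HammingObj n d} (f : x ⟶ y) {a b : Fin d → ZMod n}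
    (h : f.1 = a + b) : ∃ g : (b + x : HammingObj n d) ⟶ y, g.1 = a ∧ f = ofAdd b x ≫ g :=
  ⟨⟨a, by rw [f.2, h, add_assoc]⟩, rfl, Subsingleton.elim _ _⟩

end HammingObj

lemma eqToHom_comp_comp_eqToHom_eq_of_sigma_eq {D : Type u'} [Category.{v'} D]
    {A B A' B' P Q : D} {u : A ⟶ B} {u' : A' ⟶ B'} (h : (⟨A, B, u⟩ : Mor D) = ⟨A', B', u'⟩)
    (hA : P = A) (hB : B = Q) (hA' : P = A') (hB' : B' = Q) :
    eqToHom hA ≫ u ≫ eqToHom hB = eqToHom hA' ≫ u' ≫ eqToHom hB' := by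
  cases h
  rfl

namespace ColorConstant

variable {C : Type u'} [Category.{v'} C] {n d : ℕ} {F : HammingObj n d ⥤ C}
  (hF : ColorConstant (hColor n d) F)
include hF

lemma obj_eq (x y : HammingObj n d) : F.obj x = F.obj y :=
  congrArg Sigma.fst (hF (𝟙 x) (𝟙 y) rfl)

def endo {x y : HammingObj n d} (f : x ⟶ y) : End (F.obj 0) :=
  eqToHom (hF.obj_eq 0 x) ≫ F.map f ≫ eqToHom (hF.obj_eq y 0)

lemma endo_comp {x y z : HammingObj n d} (f : x ⟶ y) (g : y ⟶ z) :
    hF.endo (f ≫ g) = hF.endo f ≫ hF.endo g := by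
  simp [endo]

lemma endo_id (x : HammingObj n d) : hF.endo (𝟙 x) = 𝟙 _ := by
  simp [endo]

lemma endo_eq_of_hWeight_eq {x y x' y' : HammingObj n d} (f : x ⟶ y) (g : x' ⟶ y')
    (h : hWeight f.1 = hWeight g.1) : hF.endo f = hF.endo g :=
  eqToHom_comp_comp_eqToHom_eq_of_sigma_eq (hF f g h) _ _ _ _

lemma endo_eq_pow {x₁ y₁ : HammingObj n d} (f₁ : x₁ ⟶ y₁) (h₁ : hWeight f₁.1 = 1)
    {x y : HammingObj n d} (f : x ⟶ y) : hF.endo f = hF.endo f₁ ^ hWeight f.1 := by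
  induction hk : hWeight f.1 generalizing x y with
  | zero =>
    calc hF.endo f = hF.endo (𝟙 x) :=
          hF.endo_eq_of_hWeight_eq f (𝟙 x) (hk.trans (hWeight_eq_zero_iff.mpr rfl).symm)
      _ = hF.endo f₁ ^ 0 := hF.endo_id x
  | succ k ih =>
    obtain ⟨i, hi⟩ : ∃ i, f.1 i ≠ 0 := Function.ne_iff.mp (hWeight_eq_zero_iff.not.mp (by omega))
    have hsplit : f.1 = Function.update f.1 i 0 + Pi.single i (f.1 i) := by
      rw [Pi.update_eq_sub_add_single, Pi.single_zero, add_zero, sub_add_cancel]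
    obtain ⟨g, hg, hfg⟩ := HammingObj.exists_comp_of_eq_add f hsplit
    have hgk : hWeight g.1 = k := by
      have := hWeight_update_zero_add_one hi
      rw [hg]; omega
    rw [hfg, hF.endo_comp, ih g hgk, pow_succ, End.mul_def,
      hF.endo_eq_of_hWeight_eq _ f₁ ((hWeight_single i hi).trans h₁.symm)]

lemma endo_sq {x y : HammingObj n d} (f : x ⟶ y) : hF.endo f ^ 2 = 1 := by
  let f' : y ⟶ x := Groupoid.inv f
  calc hF.endo f ^ 2 = hF.endo f ≫ hF.endo f' := by
        rw [sq, End.mul_def, hF.endo_eq_of_hWeight_eq f' f (hWeight_neg f.1)]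
    _ = (1 : End (F.obj 0)) := by
        rw [← hF.endo_comp, Subsingleton.elim (f ≫ f') (𝟙 x), hF.endo_id, End.one_def]

end ColorConstant

section Involution

variable {C : Type u'} [Category.{v'} C]

abbrev Involutions (C : Type u') [Category.{v'} C] : Type (max u' v') :=
  Σ X : C, {e : End X // e ^ 2 = 1}

def ofInvolution (d : ℕ) (X : C) (e : End X) (he : e ^ 2 = 1) : HammingObj 2 d ⥤ C where
  obj _ := X
  map f := e ^ hWeight f.1
  map_id x := by
    change e ^ hWeight (0 : Fin d → ZMod 2) = 1
    rw [hWeight_eq_zero_iff.mpr rfl, pow_zero]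
  map_comp f g := by
    change e ^ hWeight (g.1 + f.1) = e ^ hWeight g.1 * e ^ hWeight f.1
    rw [← pow_add, pow_eq_pow_mod _ he, hWeight_add_mod_two, ← pow_eq_pow_mod _ he]

lemma ofInvolution_map {d : ℕ} (X : C) (e : End X) (he : e ^ 2 = 1) {x y : HammingObj 2 d}
    (f : x ⟶ y) : (ofInvolution d X e he).map f = e ^ hWeight f.1 := rfl

lemma colorConstant_ofInvolution (d : ℕ) (X : C) (e : End X) (he : e ^ 2 = 1) :
    ColorConstant (hColor 2 d) (ofInvolution d X e he) := by
  intro x y x' y' f g (hfg : hWeight f.1 = hWeight g.1)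
  change (⟨X, X, e ^ hWeight f.1⟩ : Mor C) = ⟨X, X, e ^ hWeight g.1⟩
  rw [hfg]

end Involution

def colorConstantEquivInvolutions {C : Type u'} [Category.{v'} C] {d : ℕ} (i₀ : Fin d) :
    {F : HammingObj 2 d ⥤ C // ColorConstant (hColor 2 d) F} ≃ Involutions C where
  toFun F := ⟨F.1.obj 0, ColorConstant.endo F.2 (HammingObj.ofAdd (Pi.single i₀ 1) 0),
    ColorConstant.endo_sq F.2 _⟩
  invFun e := ⟨ofInvolution d e.1 e.2.1 e.2.2, colorConstant_ofInvolution d _ _ _⟩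
  left_inv := by
    rintro ⟨F, hF⟩
    apply Subtype.ext
    refine CategoryTheory.Functor.ext (fun x => hF.obj_eq 0 x) fun x y f => ?_
    rw [ofInvolution_map, ← hF.endo_eq_pow _ (hWeight_single i₀ one_ne_zero)]
    rfl
  right_inv := by
    rintro ⟨X, e, he⟩
    refine Sigma.ext rfl (heq_of_eq (Subtype.ext ?_))
    change eqToHom rfl ≫ (e ^ hWeight (Pi.single i₀ (1 : ZMod 2)) : X ⟶ X) ≫ eqToHom rfl = e
    rw [hWeight_single i₀ one_ne_zero, pow_one, eqToHom_refl, Category.id_comp, Category.comp_id]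

/-- For positive integers `d, d'`, color-constant functors from
`H(d, 2)` to a category `C` correspond bijectively to color-constant functors
from `H(d', 2)` to `C`. -/
theorem stmt18 (C : Type u') [Category.{v'} C]
    (d d' : ℕ) (hd : 1 ≤ d) (hd' : 1 ≤ d') :
    Nonempty
      ({F : HammingObj 2 d ⥤ C // ColorConstant (hColor 2 d) F} ≃
        {F' : HammingObj 2 d' ⥤ C // ColorConstant (hColor 2 d') F'}) :=
  ⟨(colorConstantEquivInvolutions ⟨0, hd⟩).trans (colorConstantEquivInvolutions ⟨0, hd'⟩).symm⟩
end
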